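/- Let D± be a canonical mixed Boolean automaton double-cycle with left cycle (negative) of size n and right cycle (positive) of size m: f_c(x) = (¬x^ℓ_{n-1}) ∧ x^r_{m-1}, and every other automaton copies its predecessor. Then for every configuration x there is a sequence of at most 2n+m-2 asynchronous single-automaton updates transforming x into (0^n, 0^m), and (0^n, 0^m) is a stable configuration. -/

import Mathlib

/-- A configuration of a Boolean automaton double-cycle with cycles of sizes `n`
and `m`: the shared automaton `c` is index 0 of both cycles (so valid
configurations satisfy `x.1 0 = x.2 0`). -/
abbrev Cfg (n m : ℕ) := (Fin n → Bool) × (Fin m → Bool)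

/-- One asynchronous single-automaton update in a double-cycle whose shared
automaton `c` computes `fc`; every non-shared automaton copies its predecessor. -/
inductive Step {n m : ℕ} (fc : Cfg n m → Bool) : Cfg n m → Cfg n m → Prop
  | left (x : Cfg n m) (i : Fin n) (hi : 1 ≤ i.val) :
      Step fc x (Function.update x.1 i (x.1 ⟨i.val - 1, by have := i.isLt; omega⟩), x.2)
  | right (x : Cfg n m) (j : Fin m) (hj : 1 ≤ j.val) :
      Step fc x (x.1, Function.update x.2 j (x.2 ⟨j.val - 1, by have := j.isLt; omega⟩))
  | center (x : Cfg n m) (i : Fin n) (j : Fin m) (hi : i.val = 0) (hj : j.val = 0) :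
      Step fc x (Function.update x.1 i (fc x), Function.update x.2 j (fc x))

/-- `Steps fc k x y`: configuration `y` is obtained from `x` by exactly `k`
asynchronous single-automaton updates. -/
def Steps {n m : ℕ} (fc : Cfg n m → Bool) : ℕ → Cfg n m → Cfg n m → Prop
  | 0, x, y => x = y
  | k + 1, x, y => ∃ z, Step fc x z ∧ Steps fc k z y

/-
From any configuration, first make the centre `0`. If it is `1`, copy it along the negative
left cycle (`n - 1` updates); the centre then sees `¬1 ∧ _ = 0`, and one update sets it to `0`.
Once the centre is `0`, copying it along both cycles (`n - 1 + m - 1` updates) reaches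
`(0ⁿ, 0ᵐ)`, on which every automaton, the centre included, evaluates to `0`.
-/

theorem Step.swap {n m : ℕ} {fc : Cfg n m → Bool} {x y : Cfg n m} (h : Step fc x y) :
    Step (fc ∘ Prod.swap) x.swap y.swap := by
  cases h with
  | left i hi => exact Step.right x.swap i hi
  | right j hj => exact Step.left x.swap j hj
  | center i j hi hj => exact Step.center x.swap j i hj hi

theorem Step.eq_const {n m : ℕ} {fc : Cfg n m → Bool} {b : Bool}
    (hb : fc (fun _ => b, fun _ => b) = b) {y : Cfg n m}
    (h : Step fc (fun _ => b, fun _ => b) y) : y = (fun _ => b, fun _ => b) := by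
  cases h <;> ext <;> simp [Function.update_apply, hb]

namespace Steps

variable {n m : ℕ} {fc : Cfg n m → Bool}

theorem add : ∀ {a b : ℕ} {x y z : Cfg n m},
    Steps fc a x y → Steps fc b y z → Steps fc (a + b) x z
  | 0, _, _, _, _, rfl, h => by simpa using h
  | _ + 1, _, _, _, _, ⟨w, hxw, hwy⟩, h => by
    rw [Nat.add_right_comm]
    exact ⟨w, hxw, add hwy h⟩

theorem swap : ∀ {k : ℕ} {x y : Cfg n m},
    Steps fc k x y → Steps (fc ∘ Prod.swap) k x.swap y.swap
  | 0, _, _, rfl => rfl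
  | _ + 1, _, _, ⟨z, hxz, hzy⟩ => ⟨z.swap, hxz.swap, swap hzy⟩

-- Update positions `n - d, …, n - 1` in increasing order, each copying an already filled one.
theorem fill_left (b : Bool) : ∀ d < n, ∀ x : Cfg n m,
    (∀ i : Fin n, i.val + d < n → x.1 i = b) → Steps fc d x (fun _ => b, x.2)
  | 0, _, x, hx => Prod.ext (funext fun i => hx i (by omega)) rfl
  | d + 1, hd, x, hx => by
    let p : Fin n := ⟨n - d - 1, by omega⟩
    refine ⟨_, Step.left x p (by simp only [p]; omega),
      fill_left b d (by omega) _ fun i hi => ?_⟩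
    rcases eq_or_ne i p with rfl | hip
    · dsimp only
      rw [Function.update_self]
      exact hx _ (show n - d - 1 - 1 + (d + 1) < n by omega)
    · have : i.val ≠ n - d - 1 := Fin.val_ne_of_ne hip
      simp only [Function.update_of_ne hip]
      exact hx i (by omega)

theorem fill_left_of_head (hn : 0 < n) {b : Bool} {x : Cfg n m} (hx : x.1 ⟨0, hn⟩ = b) :
    Steps fc (n - 1) x (fun _ => b, x.2) :=
  fill_left b (n - 1) (by omega) x fun i hi =>
    (Fin.ext (show i.val = 0 by omega) : i = ⟨0, hn⟩) ▸ hx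

theorem fill_right_of_head (hm : 0 < m) {b : Bool} {x : Cfg n m} (hx : x.2 ⟨0, hm⟩ = b) :
    Steps fc (m - 1) x (x.1, fun _ => b) :=
  (fill_left_of_head (fc := fc ∘ Prod.swap) hm (x := x.swap) hx).swap

theorem to_const_of_head (hn : 0 < n) (hm : 0 < m) {b : Bool} {x : Cfg n m}
    (hl : x.1 ⟨0, hn⟩ = b) (hr : x.2 ⟨0, hm⟩ = b) :
    Steps fc (n - 1 + (m - 1)) x (fun _ => b, fun _ => b) :=
  (fill_left_of_head hn hl).add (fill_right_of_head hm hr)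

end Steps

theorem stmt9 (n m : ℕ) (hn : 0 < n) (hm : 0 < m) :
    (∀ x : Cfg n m, x.1 ⟨0, hn⟩ = x.2 ⟨0, hm⟩ →
      ∃ k ≤ 2 * n + m - 2,
        Steps (fun y : Cfg n m => !(y.1 ⟨n - 1, by omega⟩) && y.2 ⟨m - 1, by omega⟩)
          k x ((fun _ => false, fun _ => false) : Cfg n m)) ∧
    (∀ y : Cfg n m,
      Step (fun z : Cfg n m => !(z.1 ⟨n - 1, by omega⟩) && z.2 ⟨m - 1, by omega⟩)
        ((fun _ => false, fun _ => false) : Cfg n m) y →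
      y = ((fun _ => false, fun _ => false) : Cfg n m)) := by
  set fc : Cfg n m → Bool := fun y => !(y.1 ⟨n - 1, by omega⟩) && y.2 ⟨m - 1, by omega⟩
  refine ⟨fun x hx => ?_, fun y => Step.eq_const (by simp [fc])⟩
  cases hc : x.1 ⟨0, hn⟩
  · exact ⟨_, by omega, Steps.to_const_of_head hn hm hc (hx ▸ hc)⟩
  · have hcenter : Step fc (fun _ => true, x.2) (Function.update (fun _ => true) ⟨0, hn⟩ false,
        Function.update x.2 ⟨0, hm⟩ false) := by
      simpa [fc] using Step.center (fc := fc) (fun _ => true, x.2) ⟨0, hn⟩ ⟨0, hm⟩ rfl rfl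
    exact ⟨n - 1 + (n - 1 + (m - 1) + 1), by omega, (Steps.fill_left_of_head hn hc).add
      ⟨_, hcenter, Steps.to_const_of_head hn hm (by simp) (by simp)⟩⟩
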